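/- arXiv:2303.11068 — 8 statements merged into one kernel-verified Lean document; each statement's English description precedes it below -/
import Mathlib

section
/- Let n ≥ 3 be an integer, ρ > 0 a real number, and ω ∈ (0, 2π); set θ = ω/n. Let M be the real n×n circulant matrix whose (j,k) entry is (1/(ρ² sin θ))·(−2cos θ) when j = k, (1/(ρ² sin θ))·1 when k ≡ j±1 (mod n), and 0 otherwise. Then M is symmetric and invertible, and the associated quadratic form x ↦ xᵀMx on ℝⁿ has signature (+,−,…,−): there exist linear subspaces W₊, W₋ of ℝⁿ with dim W₊ = 1, dim W₋ = n−1, ℝⁿ = W₊ ⊕ W₋, such that xᵀMx > 0 for every nonzero x ∈ W₊ and xᵀMx < 0 for every nonzero x ∈ W₋. -/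
/-!
With `S` the cyclic shift, `M = (S + S⁻¹ - 2 cos θ) / (ρ² sin θ)`, and `0 < θ < 2π/n ≤ π`
gives `sin θ > 0`. On constant vectors the quadratic form is `2n (1 - cos θ) t² / (ρ² sin θ) > 0`.
On the hyperplane `∑ xⱼ = 0` the zero Fourier mode of `x` vanishes, and every other mode `k`
contributes with weight `cos (2πk/n) ≤ cos (2π/n) < cos θ`; Parseval then makes the form negative
definite there. A symmetric form that is definite of opposite signs on two complementary
subspaces is nondegenerate.
-/

open Real Matrix Finset
open scoped ComplexConjugate

namespace ZMod

variable {N : ℕ} [NeZero N]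

lemma sum_normSq_dft_mul_stdAddChar (Φ : ZMod N → ℂ) (a : ZMod N) :
    ∑ k, (Complex.normSq (dft Φ k) : ℂ) * stdAddChar (k * a)
      = N * ∑ j, Φ j * conj (Φ (j - a)) := by
  calc ∑ k, (Complex.normSq (dft Φ k) : ℂ) * stdAddChar (k * a)
      = ∑ k, ∑ j, ∑ l, Φ j * conj (Φ l) * stdAddChar (k * (l - (j - a))) := by
        refine sum_congr rfl fun k _ => ?_
        rw [← Complex.mul_conj, dft_apply, map_sum, sum_mul_sum, sum_mul]
        refine sum_congr rfl fun j _ => ?_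
        rw [sum_mul]
        refine sum_congr rfl fun l _ => ?_
        rw [show k * (l - (j - a)) = -(j * k) + -(-(l * k)) + k * a by ring,
          AddChar.map_add_eq_mul, AddChar.map_add_eq_mul, AddChar.map_neg_eq_conj _ (-(l * k)),
          smul_eq_mul, smul_eq_mul, map_mul]
        ring
    _ = ∑ j, ∑ l, Φ j * conj (Φ l) * ∑ k, stdAddChar (k * (l - (j - a))) := by
        rw [sum_comm]
        refine sum_congr rfl fun j _ => ?_
        rw [sum_comm]
        simp_rw [mul_sum]
    _ = N * ∑ j, Φ j * conj (Φ (j - a)) := by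
        simp_rw [AddChar.sum_mulShift _ (isPrimitive_stdAddChar N), sub_eq_zero, Nat.cast_ite,
          ZMod.card, Nat.cast_zero, mul_ite, mul_zero,
          sum_ite_eq', mem_univ, if_true, mul_sum, mul_comm]

lemma re_stdAddChar (m : ZMod N) : (stdAddChar m).re = cos (2 * π * m.val / N) := by
  rw [stdAddChar_apply, toCircle_apply, show 2 * (π : ℂ) * Complex.I * m.val / N
    = ((2 * π * m.val / N : ℝ) : ℂ) * Complex.I by push_cast; ring, Complex.exp_ofReal_mul_I_re]

lemma sum_normSq_dft_mul_cos (x : ZMod N → ℝ) (a : ZMod N) :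
    ∑ k, Complex.normSq (dft (fun j => (x j : ℂ)) k) * cos (2 * π * (k * a).val / N)
      = N * ∑ j, x j * x (j - a) := by
  have h := congrArg Complex.re (sum_normSq_dft_mul_stdAddChar (fun j => (x j : ℂ)) a)
  simp only [Complex.re_sum, Complex.re_ofReal_mul, re_stdAddChar, Complex.conj_ofReal] at h
  rw [h, show (N : ℂ) * ∑ j, (x j : ℂ) * x (j - a) = ((N * ∑ j, x j * x (j - a) : ℝ) : ℂ) by
    push_cast; rfl, Complex.ofReal_re]

lemma cos_two_pi_mul_val_div_le {k : ZMod N} (hk : k ≠ 0) :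
    cos (2 * π * k.val / N) ≤ cos (2 * π / N) := by
  have hN : (0 : ℝ) < N := Nat.cast_pos.mpr (NeZero.pos N)
  have hhalf : ∀ w : ℕ, 1 ≤ w → 2 * w ≤ N → cos (2 * π * w / N) ≤ cos (2 * π / N) := by
    intro w hw1 hw2
    have hw1 : (1 : ℝ) ≤ w := by exact_mod_cast hw1
    have hw2 : 2 * (w : ℝ) ≤ N := by exact_mod_cast hw2
    apply cos_le_cos_of_nonneg_of_le_pi (by positivity)
    · rw [div_le_iff₀ hN]; nlinarith [pi_pos]
    · exact div_le_div_of_nonneg_right (by nlinarith [pi_pos]) hN.le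
  have hv : 1 ≤ k.val := Nat.one_le_iff_ne_zero.mpr ((val_ne_zero k).mpr hk)
  rcases le_or_gt (2 * k.val) N with h | h
  · exact hhalf _ hv h
  · have hN' : k.val < N := val_lt k
    calc cos (2 * π * k.val / N) = cos (2 * π * (N - k.val : ℕ) / N) := by
          rw [Nat.cast_sub hN'.le, show 2 * π * (N - k.val : ℝ) / N = 2 * π - 2 * π * k.val / N by
            field_simp, cos_two_pi_sub]
      _ ≤ _ := hhalf _ (by omega) (by omega)

lemma sum_mul_sub_one_le_of_sum_eq_zero (x : ZMod N → ℝ) (hx : ∑ j, x j = 0) :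
    ∑ j, x j * x (j - 1) ≤ cos (2 * π / N) * ∑ j, x j ^ 2 := by
  set X := dft (fun j => (x j : ℂ))
  have hX0 : X 0 = 0 := by
    simp only [X, dft_apply_zero]; exact_mod_cast hx
  have hcos : ∀ k, Complex.normSq (X k) * cos (2 * π * (k * 1).val / N)
      ≤ Complex.normSq (X k) * cos (2 * π / N) := by
    intro k
    rcases eq_or_ne k 0 with rfl | hk
    · simp [hX0]
    · rw [mul_one]
      exact mul_le_mul_of_nonneg_left (cos_two_pi_mul_val_div_le hk) (Complex.normSq_nonneg _)
  have hN : (0 : ℝ) < N := Nat.cast_pos.mpr (NeZero.pos N)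
  have parseval := sum_normSq_dft_mul_cos x 0
  simp only [mul_zero, val_zero, CharP.cast_eq_zero, zero_div, cos_zero, mul_one,
    sub_zero] at parseval
  refine le_of_mul_le_mul_left ?_ hN
  calc (N : ℝ) * ∑ j, x j * x (j - 1)
        = ∑ k, Complex.normSq (X k) * cos (2 * π * (k * 1).val / N) :=
        (sum_normSq_dft_mul_cos x 1).symm
    _ ≤ ∑ k, Complex.normSq (X k) * cos (2 * π / N) := sum_le_sum fun k _ => hcos k
    _ = N * (cos (2 * π / N) * ∑ j, x j ^ 2) := by
        rw [← sum_mul, parseval]; simp only [sq]; ring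

end ZMod

lemma ZMod.two_ne_zero_of_three_le {n : ℕ} (hn : 3 ≤ n) : (2 : ZMod n) ≠ 0 := by
  intro h
  have h2 := (ZMod.natCast_eq_zero_iff 2 n).mp (by exact_mod_cast h)
  have := Nat.le_of_dvd two_pos h2
  omega

def Matrix.IsCyclicTridiagonal {n : ℕ} (M : Matrix (ZMod n) (ZMod n) ℝ) (a b : ℝ) : Prop :=
  ∀ j k, M j k = if k = j then a else if k = j + 1 ∨ k = j - 1 then b else 0

section IsCyclicTridiagonal

variable {n : ℕ} {a b : ℝ} {M : Matrix (ZMod n) (ZMod n) ℝ}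

lemma Matrix.isSymm_of_isCyclicTridiagonal (hM : M.IsCyclicTridiagonal a b) : M.IsSymm := by
  refine Matrix.IsSymm.ext fun j k => ?_
  rw [hM, hM]
  simp only [eq_comm (a := j), eq_sub_iff_add_eq, ← sub_eq_iff_eq_add, or_comm]

lemma Matrix.mulVec_apply_of_isCyclicTridiagonal [NeZero n] (hn : 3 ≤ n)
    (hM : M.IsCyclicTridiagonal a b) (x : ZMod n → ℝ) (j : ZMod n) :
    (M *ᵥ x) j = a * x j + b * (x (j + 1) + x (j - 1)) := by
  have h2 := ZMod.two_ne_zero_of_three_le hn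
  have h1 : (1 : ZMod n) ≠ 0 := fun h => h2 (by rw [← one_add_one_eq_two, h, add_zero])
  have d1 : ∀ k : ZMod n, k ≠ k + 1 := fun k h => h1 (by linear_combination -h)
  have d2 : ∀ k : ZMod n, k ≠ k - 1 := fun k h => h1 (by linear_combination h)
  have d3 : ∀ k : ZMod n, k + 1 ≠ k - 1 := fun k h => h2 (by linear_combination h)
  have hsplit : ∀ k, M j k * x k = (if k = j then a * x k else 0)
      + (if k = j + 1 then b * x k else 0) + (if k = j - 1 then b * x k else 0) := by
    intro k
    rw [hM]
    rcases eq_or_ne k j with rfl | hj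
    · simp [d1, d2]
    rcases eq_or_ne k (j + 1) with rfl | hj1
    · simp [(d1 j).symm, d3]
    rcases eq_or_ne k (j - 1) with rfl | hj2
    · simp [(d2 j).symm, (d3 j).symm]
    simp [hj, hj1, hj2]
  rw [mulVec, dotProduct, sum_congr rfl fun k _ => hsplit k, sum_add_distrib, sum_add_distrib]
  simp only [sum_ite_eq', mem_univ, if_true]
  ring

lemma Matrix.dotProduct_mulVec_of_isCyclicTridiagonal [NeZero n] (hn : 3 ≤ n)
    (hM : M.IsCyclicTridiagonal a b) (x : ZMod n → ℝ) :
    x ⬝ᵥ M *ᵥ x = a * ∑ j, x j ^ 2 + 2 * b * ∑ j, x j * x (j - 1) := by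
  have hshift : ∑ j, x j * x (j + 1) = ∑ j, x j * x (j - 1) := by
    rw [← (Equiv.subRight (1 : ZMod n)).sum_comp]
    simp only [Equiv.subRight_apply, sub_add_cancel, mul_comm]
  calc x ⬝ᵥ M *ᵥ x
      = ∑ j, (a * x j ^ 2 + b * (x j * x (j + 1)) + b * (x j * x (j - 1))) := by
        refine sum_congr rfl fun j _ => ?_
        rw [mulVec_apply_of_isCyclicTridiagonal hn hM]
        ring
    _ = a * ∑ j, x j ^ 2 + 2 * b * ∑ j, x j * x (j - 1) := by
        rw [sum_add_distrib, sum_add_distrib, ← mul_sum, ← mul_sum, ← mul_sum, hshift]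
        ring

lemma Matrix.dotProduct_mulVec_pos_of_isCyclicTridiagonal [NeZero n] (hn : 3 ≤ n)
    (hM : M.IsCyclicTridiagonal a b) (hab : 0 < a + 2 * b) {x : ZMod n → ℝ}
    (hx : x ∈ ℝ ∙ 1) (hx0 : x ≠ 0) : 0 < x ⬝ᵥ M *ᵥ x := by
  obtain ⟨t, rfl⟩ := Submodule.mem_span_singleton.mp hx
  have ht : t ≠ 0 := by rintro rfl; exact hx0 (zero_smul ℝ _)
  have hn0 : (0 : ℝ) < n := Nat.cast_pos.mpr (NeZero.pos n)
  rw [dotProduct_mulVec_of_isCyclicTridiagonal hn hM]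
  simp only [Pi.smul_apply, Pi.one_apply, smul_eq_mul, mul_one, sum_const, card_univ,
    ZMod.card, nsmul_eq_mul]
  have : a * (n * t ^ 2) + 2 * b * (n * (t * t)) = (a + 2 * b) * n * t ^ 2 := by ring
  rw [this]
  exact mul_pos (mul_pos hab hn0) (pow_two_pos_of_ne_zero ht)

lemma Matrix.dotProduct_mulVec_neg_of_isCyclicTridiagonal [NeZero n] (hn : 3 ≤ n)
    (hM : M.IsCyclicTridiagonal a b) (hb : 0 ≤ b) (hab : a + 2 * b * cos (2 * π / n) < 0)
    {x : ZMod n → ℝ} (hx : ∑ j, x j = 0) (hx0 : x ≠ 0) : x ⬝ᵥ M *ᵥ x < 0 := by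
  have hsq : 0 < ∑ j, x j ^ 2 := by
    obtain ⟨j, hj⟩ := Function.ne_iff.mp hx0
    exact sum_pos' (fun j _ => sq_nonneg (x j)) ⟨j, mem_univ j, pow_two_pos_of_ne_zero hj⟩
  calc x ⬝ᵥ M *ᵥ x = a * ∑ j, x j ^ 2 + 2 * b * ∑ j, x j * x (j - 1) :=
        dotProduct_mulVec_of_isCyclicTridiagonal hn hM x
    _ ≤ a * ∑ j, x j ^ 2 + 2 * b * (cos (2 * π / n) * ∑ j, x j ^ 2) := by
        gcongr
        exact ZMod.sum_mul_sub_one_le_of_sum_eq_zero x hx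
    _ = (a + 2 * b * cos (2 * π / n)) * ∑ j, x j ^ 2 := by ring
    _ < 0 := mul_neg_of_neg_of_pos hab hsq

end IsCyclicTridiagonal

lemma Matrix.isUnit_of_isSymm_of_definite_on_sup_eq_top {ι : Type*} [Fintype ι] [DecidableEq ι]
    {A : Matrix ι ι ℝ} (hA : A.IsSymm) {P N : Submodule ℝ (ι → ℝ)} (hPN : P ⊔ N = ⊤)
    (hP : ∀ x ∈ P, x ≠ 0 → 0 < x ⬝ᵥ A *ᵥ x) (hN : ∀ x ∈ N, x ≠ 0 → x ⬝ᵥ A *ᵥ x < 0) :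
    IsUnit A := by
  rw [← mulVec_injective_iff_isUnit]
  refine (injective_iff_map_eq_zero A.mulVecLin).mpr fun x hx => ?_
  obtain ⟨p, hp, m, hm, rfl⟩ := Submodule.mem_sup.mp (hPN ▸ Submodule.mem_top : x ∈ P ⊔ N)
  rw [mulVecLin_apply] at hx
  have hpm : p ⬝ᵥ A *ᵥ m = m ⬝ᵥ A *ᵥ p := by
    rw [dotProduct_mulVec, ← mulVec_transpose, hA.eq, dotProduct_comm]
  have hQ : p ⬝ᵥ A *ᵥ p = m ⬝ᵥ A *ᵥ m := by
    have hp' : p ⬝ᵥ A *ᵥ (p + m) = 0 := by rw [hx, dotProduct_zero]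
    have hm' : m ⬝ᵥ A *ᵥ (p + m) = 0 := by rw [hx, dotProduct_zero]
    rw [mulVec_add, dotProduct_add] at hp' hm'
    linarith
  have hp0 : p = 0 := by
    by_contra hp0
    have hm0 : m ≠ 0 := by
      rintro rfl
      simp only [mulVec_zero, dotProduct_zero] at hQ
      linarith [hP p hp hp0]
    linarith [hP p hp hp0, hN m hm hm0]
  subst hp0
  have hm0 : m = 0 := by
    by_contra hm0
    simp only [mulVec_zero, dotProduct_zero] at hQ
    linarith [hN m hm hm0]
  rw [hm0, add_zero]

lemma LinearMap.isCompl_span_singleton_ker {K V : Type*} [Field K] [AddCommGroup V] [Module K V]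
    (f : V →ₗ[K] K) {x : V} (hx : f x ≠ 0) : IsCompl (K ∙ x) (ker f) := by
  refine ⟨?_, codisjoint_iff.mpr (span_singleton_sup_ker_eq_top f hx)⟩
  rw [Submodule.disjoint_def]
  intro y hy hyf
  obtain ⟨t, rfl⟩ := Submodule.mem_span_singleton.mp hy
  rw [mem_ker, map_smul, smul_eq_mul, mul_eq_zero] at hyf
  rw [hyf.resolve_right hx, zero_smul]

/-- The circulant matrix of the bilinear form of a regular Euclidean cone-polygon with
`n ≥ 3` boundary vertices, total cone angle `ω ∈ (0, 2π)` and equal radii `ρ > 0` is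
symmetric, invertible, and its quadratic form has signature `(+, −, …, −)`. -/
theorem circulant_signature (n : ℕ) (hn : 3 ≤ n) [NeZero n]
    (ρ ω : ℝ) (hρ : 0 < ρ) (hω : ω ∈ Set.Ioo 0 (2 * π))
    (θ : ℝ) (hθ : θ = ω / n)
    (M : Matrix (ZMod n) (ZMod n) ℝ)
    (hM : ∀ j k : ZMod n, M j k =
      if k = j then 1 / (ρ ^ 2 * Real.sin θ) * (-2 * Real.cos θ)
      else if k = j + 1 ∨ k = j - 1 then 1 / (ρ ^ 2 * Real.sin θ)
      else 0) :
    M.IsSymm ∧ IsUnit M ∧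
    ∃ Wp Wm : Submodule ℝ (ZMod n → ℝ),
      Module.finrank ℝ Wp = 1 ∧ Module.finrank ℝ Wm = n - 1 ∧
      IsCompl Wp Wm ∧
      (∀ x ∈ Wp, x ≠ 0 → 0 < x ⬝ᵥ M.mulVec x) ∧
      (∀ x ∈ Wm, x ≠ 0 → x ⬝ᵥ M.mulVec x < 0) := by
  obtain ⟨hω0, hω2π⟩ := hω
  have hn0 : (0 : ℝ) < n := Nat.cast_pos.mpr (NeZero.pos n)
  have hθ0 : 0 < θ := hθ ▸ div_pos hω0 hn0
  have hθn : θ < 2 * π / n := hθ ▸ div_lt_div_of_pos_right hω2π hn0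
  have h2πn : 2 * π / n ≤ π := by
    have hn3 : (3 : ℝ) ≤ n := by exact_mod_cast hn
    rw [div_le_iff₀ hn0]; nlinarith [pi_pos]
  have hC : 0 < 1 / (ρ ^ 2 * sin θ) := by
    have := sin_pos_of_pos_of_lt_pi hθ0 (hθn.trans_le h2πn); positivity
  have hcos_lt_one : cos θ < 1 := by
    simpa using cos_lt_cos_of_nonneg_of_le_pi le_rfl (hθn.trans_le h2πn).le hθ0
  have hcos_lt : cos (2 * π / n) < cos θ := cos_lt_cos_of_nonneg_of_le_pi hθ0.le h2πn hθn
  let σ : (ZMod n → ℝ) →ₗ[ℝ] ℝ := Fintype.linearCombination ℝ fun _ => 1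
  have hσ : ∀ x, σ x = ∑ j, x j := fun x => by simp [σ, Fintype.linearCombination_apply]
  have hσ1 : σ 1 ≠ 0 := by simp [hσ, NeZero.ne n]
  have hcompl := LinearMap.isCompl_span_singleton_ker σ hσ1
  have hpos : ∀ x ∈ ℝ ∙ 1, x ≠ 0 → 0 < x ⬝ᵥ M *ᵥ x := fun x hx hx0 =>
    dotProduct_mulVec_pos_of_isCyclicTridiagonal hn hM (by nlinarith) hx hx0
  have hneg : ∀ x ∈ LinearMap.ker σ, x ≠ 0 → x ⬝ᵥ M *ᵥ x < 0 := fun x hx hx0 =>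
    dotProduct_mulVec_neg_of_isCyclicTridiagonal hn hM hC.le (by nlinarith)
      ((hσ x).symm.trans hx) hx0
  have hrank := Submodule.finrank_add_eq_of_isCompl hcompl
  rw [finrank_span_singleton one_ne_zero, Module.finrank_fintype_fun_eq_card, ZMod.card] at hrank
  exact ⟨isSymm_of_isCyclicTridiagonal hM,
    isUnit_of_isSymm_of_definite_on_sup_eq_top (isSymm_of_isCyclicTridiagonal hM)
      hcompl.sup_eq_top hpos hneg,
    _, _, finrank_span_singleton one_ne_zero, by omega, hcompl, hpos, hneg⟩
end

section
/- Let a, u₁, u₂ ∈ ℝ with u₁ + u₂ > a. Define ρ₁₂ = √(exp(u₂ − u₁ − a) − exp(−2u₁)), ρ₂₁ = √(exp(u₁ − u₂ − a) − exp(−2u₂)) (both expressions under the square roots are positive) and l = arccos(1 − 2·exp(a − u₁ − u₂)) ∈ (0, π). Then (1/2)·sin(l)·exp(−a) = ρ₁₂·exp(−u₂) = ρ₂₁·exp(−u₁); equivalently, the square of each of these three quantities equals exp(−u₁ − u₂ − a) − exp(−2u₁ − 2u₂). -/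
open Real

/-- Sine laws for a decorated semi-ideal hyperbolic triangle. -/
theorem semi_ideal_sine_law (a u₁ u₂ : ℝ) (h : a < u₁ + u₂)
    (ρ₁₂ ρ₂₁ l : ℝ)
    (hρ₁₂ : ρ₁₂ = Real.sqrt (Real.exp (u₂ - u₁ - a) - Real.exp (-2 * u₁)))
    (hρ₂₁ : ρ₂₁ = Real.sqrt (Real.exp (u₁ - u₂ - a) - Real.exp (-2 * u₂)))
    (hl : l = Real.arccos (1 - 2 * Real.exp (a - u₁ - u₂))) :
    0 < Real.exp (u₂ - u₁ - a) - Real.exp (-2 * u₁) ∧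
    0 < Real.exp (u₁ - u₂ - a) - Real.exp (-2 * u₂) ∧
    l ∈ Set.Ioo 0 π ∧
    (1 / 2 * Real.sin l * Real.exp (-a) = ρ₁₂ * Real.exp (-u₂)) ∧
    (ρ₁₂ * Real.exp (-u₂) = ρ₂₁ * Real.exp (-u₁)) ∧
    (1 / 2 * Real.sin l * Real.exp (-a)) ^ 2
      = Real.exp (-u₁ - u₂ - a) - Real.exp (-2 * u₁ - 2 * u₂) := by
  have hep : 0 < Real.exp (a - u₁ - u₂) := Real.exp_pos _
  have he1 : Real.exp (a - u₁ - u₂) < 1 := by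
    rw [Real.exp_lt_one_iff]; linarith
  have h1 : 0 < Real.exp (u₂ - u₁ - a) - Real.exp (-2 * u₁) := by
    have := Real.exp_lt_exp.mpr (show -2 * u₁ < u₂ - u₁ - a by linarith)
    linarith
  have h2 : 0 < Real.exp (u₁ - u₂ - a) - Real.exp (-2 * u₂) := by
    have := Real.exp_lt_exp.mpr (show -2 * u₂ < u₁ - u₂ - a by linarith)
    linarith
  have hl1 : 0 < l := by
    rw [hl]; exact Real.arccos_pos.mpr (by nlinarith)
  have hl2 : l < π := by
    rw [hl]
    refine lt_of_le_of_ne (Real.arccos_le_pi _) fun hc => ?_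
    have := Real.arccos_eq_pi.mp hc
    nlinarith
  set x : ℝ := 1 - 2 * Real.exp (a - u₁ - u₂) with hx
  have hx2 : 1 - x ^ 2 = 4 * Real.exp (a - u₁ - u₂) - 4 * Real.exp (a - u₁ - u₂) ^ 2 := by
    ring
  have hx2nn : 0 ≤ 1 - x ^ 2 := by nlinarith
  have hsin : Real.sin l = Real.sqrt (1 - x ^ 2) := by
    rw [hl, Real.sin_arccos]
  have hsin2 : Real.sin l ^ 2 = 1 - x ^ 2 := by
    rw [hsin, Real.sq_sqrt hx2nn]
  have hsinnn : 0 ≤ Real.sin l := Real.sin_nonneg_of_nonneg_of_le_pi hl1.le hl2.le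
  -- exp arithmetic
  have ea : Real.exp (a - u₁ - u₂) * (Real.exp (-a) * Real.exp (-a)) = Real.exp (-u₁ - u₂ - a) := by
    rw [← Real.exp_add, ← Real.exp_add]; ring_nf
  have eb : Real.exp (a - u₁ - u₂) ^ 2 * (Real.exp (-a) * Real.exp (-a)) = Real.exp (-2 * u₁ - 2 * u₂) := by
    rw [sq, ← Real.exp_add, ← Real.exp_add, ← Real.exp_add]; ring_nf
  have ec : Real.exp (u₂ - u₁ - a) * (Real.exp (-u₂) * Real.exp (-u₂)) = Real.exp (-u₁ - u₂ - a) := by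
    rw [← Real.exp_add, ← Real.exp_add]; ring_nf
  have ed : Real.exp (-2 * u₁) * (Real.exp (-u₂) * Real.exp (-u₂)) = Real.exp (-2 * u₁ - 2 * u₂) := by
    rw [← Real.exp_add, ← Real.exp_add]; ring_nf
  have ee : Real.exp (u₁ - u₂ - a) * (Real.exp (-u₁) * Real.exp (-u₁)) = Real.exp (-u₁ - u₂ - a) := by
    rw [← Real.exp_add, ← Real.exp_add]; ring_nf
  have ef : Real.exp (-2 * u₂) * (Real.exp (-u₁) * Real.exp (-u₁)) = Real.exp (-2 * u₁ - 2 * u₂) := by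
    rw [← Real.exp_add, ← Real.exp_add]; ring_nf
  set T : ℝ := Real.exp (-u₁ - u₂ - a) - Real.exp (-2 * u₁ - 2 * u₂) with hT
  have hS2 : (1 / 2 * Real.sin l * Real.exp (-a)) ^ 2 = T := by
    have : (1 / 2 * Real.sin l * Real.exp (-a)) ^ 2
        = 1 / 4 * (Real.sin l ^ 2) * (Real.exp (-a) * Real.exp (-a)) := by ring
    rw [this, hsin2, hx2, hT]
    linear_combination ea - eb
  have hρ12sq : ρ₁₂ ^ 2 = Real.exp (u₂ - u₁ - a) - Real.exp (-2 * u₁) := by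
    rw [hρ₁₂, Real.sq_sqrt h1.le]
  have hρ21sq : ρ₂₁ ^ 2 = Real.exp (u₁ - u₂ - a) - Real.exp (-2 * u₂) := by
    rw [hρ₂₁, Real.sq_sqrt h2.le]
  have hP2 : (ρ₁₂ * Real.exp (-u₂)) ^ 2 = T := by
    have : (ρ₁₂ * Real.exp (-u₂)) ^ 2 = ρ₁₂ ^ 2 * (Real.exp (-u₂) * Real.exp (-u₂)) := by ring
    rw [this, hρ12sq, hT]
    linear_combination ec - ed
  have hQ2 : (ρ₂₁ * Real.exp (-u₁)) ^ 2 = T := by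
    have : (ρ₂₁ * Real.exp (-u₁)) ^ 2 = ρ₂₁ ^ 2 * (Real.exp (-u₁) * Real.exp (-u₁)) := by ring
    rw [this, hρ21sq, hT]
    linear_combination ee - ef
  have hSnn : 0 ≤ 1 / 2 * Real.sin l * Real.exp (-a) := by positivity
  have hρ12nn : 0 ≤ ρ₁₂ := hρ₁₂ ▸ Real.sqrt_nonneg _
  have hρ21nn : 0 ≤ ρ₂₁ := hρ₂₁ ▸ Real.sqrt_nonneg _
  have hPnn : 0 ≤ ρ₁₂ * Real.exp (-u₂) := by positivity
  have hQnn : 0 ≤ ρ₂₁ * Real.exp (-u₁) := by positivity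
  have hS : 1 / 2 * Real.sin l * Real.exp (-a) = Real.sqrt T := by
    rw [← Real.sqrt_sq hSnn, hS2]
  have hP : ρ₁₂ * Real.exp (-u₂) = Real.sqrt T := by
    rw [← Real.sqrt_sq hPnn, hP2]
  have hQ : ρ₂₁ * Real.exp (-u₁) = Real.sqrt T := by
    rw [← Real.sqrt_sq hQnn, hQ2]
  exact ⟨h1, h2, ⟨hl1, hl2⟩, by rw [hS, hP], by rw [hP, hQ], hS2⟩
end

section
/- Let a, u₂ ∈ ℝ and u₁ ∈ ℝ with u₁ + u₂ > a, and set l = arccos(1 − 2·exp(a − u₁ − u₂)) ∈ (0, π). Then: (i) the function u ↦ √(exp(u₂ − u − a) − exp(−2u)) is differentiable at u₁ with derivative −cos(l)/(sin(l)·exp(u₁)) = −cot(l)/exp(u₁); and (ii) the function u ↦ √(exp(u − u₁ − a) − exp(−2u₁)) is differentiable at u₂ with derivative 1/(exp(u₁)·sin(l)). -/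
open Real

/-! With `t = exp (a - u₁ - u₂) ∈ (0, 1)` and `x = exp (-u₁)`, the angle satisfies `cos l = 1 - 2t`
and `sin l = 2 √(t (1 - t))`, while `ρ₁₂² = x² (1 - t) / t`, so `ρ₁₂ = x √(t (1 - t)) / t`.
Both derivatives then follow from the chain rule for `√` by clearing denominators. -/

theorem sin_arccos_one_sub_two_mul (t : ℝ) : sin (arccos (1 - 2 * t)) = 2 * √(t * (1 - t)) := by
  rw [sin_arccos, show 1 - (1 - 2 * t) ^ 2 = 2 ^ 2 * (t * (1 - t)) by ring,
    sqrt_mul (sq_nonneg 2), sqrt_sq zero_le_two]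

theorem sqrt_sq_mul_one_sub_div {x t : ℝ} (hx : 0 ≤ x) (ht : 0 < t) :
    √(x ^ 2 * (1 - t) / t) = x * √(t * (1 - t)) / t := by
  rw [show x ^ 2 * (1 - t) / t = (x / t) ^ 2 * (t * (1 - t)) by field_simp,
    sqrt_mul (sq_nonneg _), sqrt_sq (div_nonneg hx ht.le)]
  ring

/-- Derivatives of the horocyclic arc length `ρ₁₂` of a decorated semi-ideal hyperbolic
triangle with respect to the distances `u₁`, `u₂` from the non-ideal vertex to the
horocycles, the decorated side length `a` being fixed. -/
theorem horocyclic_arc_derivatives (a u₁ u₂ : ℝ) (h : a < u₁ + u₂) (l : ℝ)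
    (hl : l = Real.arccos (1 - 2 * Real.exp (a - u₁ - u₂))) :
    HasDerivAt (fun u => Real.sqrt (Real.exp (u₂ - u - a) - Real.exp (-2 * u)))
      (-(Real.cos l / (Real.sin l * Real.exp u₁))) u₁ ∧
    HasDerivAt (fun u => Real.sqrt (Real.exp (u - u₁ - a) - Real.exp (-2 * u₁)))
      (1 / (Real.exp u₁ * Real.sin l)) u₂ := by
  set t := exp (a - u₁ - u₂) with ht
  set x := exp (-u₁) with hx
  have ht₀ : 0 < t := exp_pos _
  have ht₁ : t < 1 := exp_lt_one_iff.mpr (by linarith)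
  have hx₀ : 0 < x := exp_pos _
  have hs₀ : 0 < √(t * (1 - t)) := sqrt_pos.mpr (mul_pos ht₀ (by linarith))
  have hexp₁ : exp u₁ = x⁻¹ := by rw [hx, exp_neg, inv_inv]
  have hexp₂ : exp (-2 * u₁) = x ^ 2 := by rw [hx, ← exp_nat_mul]; ring_nf
  have hexp₃ : exp (u₂ - u₁ - a) = x ^ 2 / t := by
    rw [eq_div_iff ht₀.ne', ht, ← exp_add, ← hexp₂]; ring_nf
  have hρ : exp (u₂ - u₁ - a) - exp (-2 * u₁) = x ^ 2 * (1 - t) / t := by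
    rw [hexp₃, hexp₂]; field_simp
  have hρ₀ : exp (u₂ - u₁ - a) - exp (-2 * u₁) ≠ 0 := by
    rw [hρ]; exact (div_pos (mul_pos (pow_pos hx₀ 2) (sub_pos.mpr ht₁)) ht₀).ne'
  rw [hl, cos_arccos (x := 1 - 2 * t) (by linarith) (by linarith), sin_arccos_one_sub_two_mul]
  constructor
  · have hd : HasDerivAt (fun u => exp (u₂ - u - a) - exp (-2 * u))
        (exp (u₂ - u₁ - a) * (-1) - exp (-2 * u₁) * (-2)) u₁ := by
      simpa using (((hasDerivAt_id u₁).const_sub u₂).sub_const a).exp.fun_sub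
        ((hasDerivAt_id u₁).const_mul (-2)).exp
    convert hd.sqrt hρ₀ using 1
    rw [hρ, sqrt_sq_mul_one_sub_div hx₀.le ht₀, hexp₁, hexp₂, hexp₃]
    field_simp
    ring
  · have hd : HasDerivAt (fun u => exp (u - u₁ - a) - exp (-2 * u₁)) (exp (u₂ - u₁ - a)) u₂ := by
      simpa using (((hasDerivAt_id u₂).sub_const u₁).sub_const a).exp.sub_const (exp (-2 * u₁))
    convert hd.sqrt hρ₀ using 1
    rw [hρ, sqrt_sq_mul_one_sub_div hx₀.le ht₀, hexp₁, hexp₃]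
    field_simp
end

section
/- Let y, c > 0 and let x > 0 satisfy the strict triangle inequalities |x − y| < c < x + y (so x, y, c are side lengths of a nondegenerate Euclidean triangle). Let α = arccos((x² + c² − y²)/(2xc)) ∈ (0, π) be the angle of this triangle opposite the side y. Then the function f(s) = arccos((s² + y² − c²)/(2sy)) (the angle between the sides of lengths s and y, with the third side length c held fixed) is differentiable at x with f′(x) = −cot(α)/x. -/
/-!
Write `u(s) = (s² + y² − c²)/(2sy)` for the cosine of the angle `ω(s) = arccos (u s)`. Then
`u'(x) = (x² + c² − y²)/(2x²y) = (c / (xy)) cos α`, and the chain rule gives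
`ω'(x) = −u'(x) / sin ω`. By Heron's formula both `sin ω = √K/(2xy)` and `sin α = √K/(2xc)` with
the same `K = (x+y+c)(−x+y+c)(x−y+c)(x+y−c)` (the law of sines), and `K > 0` for a
nondegenerate triangle, so `ω'(x) = −cos α / (x sin α)`.
-/

open Real

/-- The angle between the sides `a` and `b` of a triangle whose third side is `c`. -/
noncomputable def triangleAngle (a b c : ℝ) : ℝ :=
  arccos ((a ^ 2 + b ^ 2 - c ^ 2) / (2 * a * b))

/-- Sixteen times the squared area of a triangle with sides `a`, `b`, `c` (Heron). -/
def heronProduct (a b c : ℝ) : ℝ :=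
  (a + b + c) * (-a + b + c) * (a - b + c) * (a + b - c)

lemma heronProduct_swap (a b c : ℝ) : heronProduct a c b = heronProduct a b c := by
  unfold heronProduct; ring

section Triangle

variable {a b c : ℝ}

lemma pos_of_abs_sub_lt_of_lt_add (h₁ : |a - b| < c) (h₂ : c < a + b) :
    0 < a ∧ 0 < b ∧ 0 < c := by
  obtain ⟨h₁a, h₁b⟩ := abs_lt.mp h₁
  refine ⟨?_, ?_, ?_⟩ <;> linarith

lemma heronProduct_pos (h₁ : |a - b| < c) (h₂ : c < a + b) : 0 < heronProduct a b c := by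
  obtain ⟨h₁a, h₁b⟩ := abs_lt.mp h₁
  unfold heronProduct
  have : 0 < a + b + c := by linarith
  have : 0 < -a + b + c := by linarith
  have : 0 < a - b + c := by linarith
  have : 0 < a + b - c := by linarith
  positivity

lemma one_sub_sq_cosineRule (ha : a ≠ 0) (hb : b ≠ 0) :
    1 - ((a ^ 2 + b ^ 2 - c ^ 2) / (2 * a * b)) ^ 2 = heronProduct a b c / (2 * a * b) ^ 2 := by
  unfold heronProduct
  field_simp
  ring

lemma sq_cosineRule_lt_one (ha : a ≠ 0) (hb : b ≠ 0) (hK : 0 < heronProduct a b c) :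
    ((a ^ 2 + b ^ 2 - c ^ 2) / (2 * a * b)) ^ 2 < 1 := by
  have := one_sub_sq_cosineRule (c := c) ha hb
  have : 0 < heronProduct a b c / (2 * a * b) ^ 2 := by positivity
  linarith

lemma cos_triangleAngle (ha : a ≠ 0) (hb : b ≠ 0) (hK : 0 ≤ heronProduct a b c) :
    cos (triangleAngle a b c) = (a ^ 2 + b ^ 2 - c ^ 2) / (2 * a * b) := by
  have hsq := one_sub_sq_cosineRule (c := c) ha hb
  have : 0 ≤ heronProduct a b c / (2 * a * b) ^ 2 := by positivity
  have hu : ((a ^ 2 + b ^ 2 - c ^ 2) / (2 * a * b)) ^ 2 ≤ 1 := by linarith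
  obtain ⟨hlo, hhi⟩ := abs_le.mp ((sq_le_one_iff_abs_le_one _).mp hu)
  exact cos_arccos hlo hhi

lemma sin_triangleAngle (ha : 0 < a) (hb : 0 < b) :
    sin (triangleAngle a b c) = √(heronProduct a b c) / (2 * a * b) := by
  rw [triangleAngle, sin_arccos, one_sub_sq_cosineRule ha.ne' hb.ne',
    sqrt_div' _ (sq_nonneg _), sqrt_sq (by positivity)]

lemma hasDerivAt_cosineRule (ha : a ≠ 0) (hb : b ≠ 0) :
    HasDerivAt (fun s => (s ^ 2 + b ^ 2 - c ^ 2) / (2 * s * b))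
      ((a ^ 2 + c ^ 2 - b ^ 2) / (2 * a ^ 2 * b)) a := by
  have hnum : HasDerivAt (fun s => s ^ 2 + b ^ 2 - c ^ 2) (2 * a) a := by
    simpa using ((hasDerivAt_pow 2 a).add_const (b ^ 2)).sub_const (c ^ 2)
  have hden : HasDerivAt (fun s => 2 * s * b) (2 * b) a := by
    simpa using ((hasDerivAt_id a).const_mul 2).mul_const b
  refine (hnum.div hden (by positivity)).congr_deriv ?_
  field_simp
  ring

theorem hasDerivAt_triangleAngle (h₁ : |a - b| < c) (h₂ : c < a + b) :
    HasDerivAt (fun s => triangleAngle s b c)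
      (-(cos (triangleAngle a c b) / sin (triangleAngle a c b)) / a) a := by
  obtain ⟨ha, hb, hc⟩ := pos_of_abs_sub_lt_of_lt_add h₁ h₂
  have hK := heronProduct_pos h₁ h₂
  obtain ⟨hlo, hhi⟩ := abs_lt.mp <|
    (sq_lt_one_iff_abs_lt_one _).mp (sq_cosineRule_lt_one (c := c) ha.ne' hb.ne' hK)
  have hω := (hasDerivAt_arccos hlo.ne' hhi.ne).comp a (hasDerivAt_cosineRule ha.ne' hb.ne')
  refine hω.congr_deriv ?_
  have hsK : √(heronProduct a b c) ≠ 0 := (sqrt_pos.mpr hK).ne'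
  rw [← sin_arccos, ← triangleAngle, sin_triangleAngle ha hb, sin_triangleAngle ha hc,
    cos_triangleAngle ha.ne' hc.ne' (heronProduct_swap a b c ▸ hK.le), heronProduct_swap]
  field_simp

end Triangle

theorem angle_derivative_cone_polygon_general (x y c : ℝ)
    (h₁ : |x - y| < c) (h₂ : c < x + y) (α : ℝ)
    (hα : α = Real.arccos ((x ^ 2 + c ^ 2 - y ^ 2) / (2 * x * c))) :
    HasDerivAt (fun s => Real.arccos ((s ^ 2 + y ^ 2 - c ^ 2) / (2 * s * y)))
      (-(Real.cos α / Real.sin α) / x) x := by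
  subst hα
  exact hasDerivAt_triangleAngle h₁ h₂

/-- In a Euclidean triangle with side lengths `x`, `y`, `c`, the derivative of the angle
`ω = arccos ((x² + y² − c²)/(2xy))` between the sides `x` and `y`, with respect to `x`,
is `−cot α / x`, where `α = arccos ((x² + c² − y²)/(2xc))` is the angle opposite `y`. -/
theorem angle_derivative_cone_polygon (x y c : ℝ) (hx : 0 < x) (hy : 0 < y) (hc : 0 < c)
    (h₁ : |x - y| < c) (h₂ : c < x + y) (α : ℝ)
    (hα : α = Real.arccos ((x ^ 2 + c ^ 2 - y ^ 2) / (2 * x * c))) :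
    HasDerivAt (fun s => Real.arccos ((s ^ 2 + y ^ 2 - c ^ 2) / (2 * s * y)))
      (-(Real.cos α / Real.sin α) / x) x :=
  angle_derivative_cone_polygon_general x y c h₁ h₂ α hα
end

section
/- Let l₁, l₂, l₃ ∈ (0, π) satisfy the strict triangle inequalities (each one is less than the sum of the other two) and l₁ + l₂ + l₃ < 2π. Then there exist unit vectors u, v, w in the Euclidean space ℝ³ that are linearly independent and satisfy ⟨v, w⟩ = cos l₁, ⟨u, w⟩ = cos l₂, ⟨u, v⟩ = cos l₃ (i.e., the pairwise spherical distances are l₁, l₂, l₃). Moreover, such a triple is unique up to a linear isometry: if (u′, v′, w′) is another triple of unit vectors with the same pairwise inner products, then there is a linear isometric equivalence of ℝ³ taking u to u′, v to v′, and w to w′. -/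
/-!
The Gram matrix of the vertices `u, v, w` is the matrix of cosines of the sides, and its
determinant factors as `(cos (l₂ - l₃) - cos l₁) * (cos l₁ - cos (l₂ + l₃))`; the triangle
inequalities and `l₁ + l₂ + l₃ < 2π` make both factors positive. A positive determinant makes
any realization a basis of `ℝ³`, and two bases with the same Gram matrix differ by a linear
isometry. A realization is found by running Gram–Schmidt backwards: `u = e₀`, `v ∈ span {e₀, e₁}`,
and the last coordinate of `w` has square `det / sin² l₃ > 0`.
-/

open Real Matrix
open scoped RealInnerProductSpace

theorem LinearIndependent.exists_linearIsometryEquiv_of_gram_eq {ι E : Type*} [Fintype ι]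
    [NormedAddCommGroup E] [InnerProductSpace ℝ E] [FiniteDimensional ℝ E] {v v' : ι → E}
    (hv : LinearIndependent ℝ v) (hcard : Fintype.card ι = Module.finrank ℝ E)
    (h : gram ℝ v' = gram ℝ v) : ∃ f : E ≃ₗᵢ[ℝ] E, ∀ i, f (v i) = v' i := by
  let b := basisOfLinearIndependentOfCardEqFinrank' v hv hcard
  have hb : ⇑b = v := coe_basisOfLinearIndependentOfCardEqFinrank' v hv hcard
  let f := b.constr ℝ v'
  have hf : ∀ i, f (v i) = v' i := fun i => by rw [← hb, b.constr_basis]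
  have hf_inner : ∀ x y, ⟪f x, f y⟫ = ⟪x, y⟫ := by
    intro x y
    rw [← b.sum_repr x, ← b.sum_repr y]
    simp only [map_sum, map_smul, sum_inner, inner_sum, real_inner_smul_left,
      real_inner_smul_right, hb, hf]
    simp only [← gram_apply (𝕜 := ℝ), h]
  exact ⟨(f.isometryOfInner hf_inner).toLinearIsometryEquiv rfl, hf⟩

def cosineMatrix (c₁ c₂ c₃ : ℝ) : Matrix (Fin 3) (Fin 3) ℝ :=
  !![1, c₃, c₂; c₃, 1, c₁; c₂, c₁, 1]

theorem gram_eq_cosineMatrix_iff {E : Type*} [NormedAddCommGroup E] [InnerProductSpace ℝ E]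
    {u v w : E} {c₁ c₂ c₃ : ℝ} :
    gram ℝ ![u, v, w] = cosineMatrix c₁ c₂ c₃ ↔
      ‖u‖ = 1 ∧ ‖v‖ = 1 ∧ ‖w‖ = 1 ∧ ⟪v, w⟫ = c₁ ∧ ⟪u, w⟫ = c₂ ∧ ⟪u, v⟫ = c₃ := by
  simp only [← Matrix.ext_iff, Fin.forall_fin_succ, IsEmpty.forall_iff, and_true, gram_apply,
    cosineMatrix, of_apply, cons_val', cons_val_fin_one, cons_val_zero, cons_val_succ,
    real_inner_self_eq_norm_sq, pow_eq_one_iff_of_nonneg (norm_nonneg _) two_ne_zero,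
    real_inner_comm]
  tauto

theorem det_cosineMatrix (c₁ c₂ c₃ : ℝ) :
    (cosineMatrix c₁ c₂ c₃).det = 1 + 2 * c₁ * c₂ * c₃ - c₁ ^ 2 - c₂ ^ 2 - c₃ ^ 2 := by
  simp only [cosineMatrix, det_fin_three, of_apply, cons_val', cons_val_zero, cons_val_one,
    cons_val, cons_val_fin_one]
  ring

theorem det_cosineMatrix_cos (a b c : ℝ) :
    (cosineMatrix (cos a) (cos b) (cos c)).det =
      (cos (b - c) - cos a) * (cos a - cos (b + c)) := by
  rw [det_cosineMatrix, cos_sub, cos_add]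
  linear_combination (cos c ^ 2 - 1) * sin_sq_add_cos_sq b - sin b ^ 2 * sin_sq_add_cos_sq c

theorem det_cosineMatrix_cos_pos {a b c : ℝ} (h₁ : a < b + c) (h₂ : b < a + c) (h₃ : c < a + b)
    (hsum : a + b + c < 2 * π) : 0 < (cosineMatrix (cos a) (cos b) (cos c)).det := by
  have h_sub : cos a < cos (b - c) := by
    rw [← cos_abs (b - c)]
    exact cos_lt_cos_of_nonneg_of_le_pi (abs_nonneg _) (by linarith)
      (abs_sub_lt_iff.2 ⟨by linarith, by linarith⟩)
  have h_add : cos (b + c) < cos a := by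
    rcases le_total (b + c) π with h | h
    · exact cos_lt_cos_of_nonneg_of_le_pi (by linarith) h h₁
    · rw [← cos_two_pi_sub]
      exact cos_lt_cos_of_nonneg_of_le_pi (by linarith) (by linarith) (by linarith)
  rw [det_cosineMatrix_cos]
  exact mul_pos (sub_pos.2 h_sub) (sub_pos.2 h_add)

theorem exists_gram_eq_cosineMatrix {c₁ c₂ c₃ : ℝ} (hc₃ : c₃ ^ 2 < 1)
    (hdet : 0 < (cosineMatrix c₁ c₂ c₃).det) :
    ∃ u v w : EuclideanSpace ℝ (Fin 3), gram ℝ ![u, v, w] = cosineMatrix c₁ c₂ c₃ := by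
  obtain ⟨s, hs, hs2⟩ : ∃ s, 0 < s ∧ s ^ 2 = 1 - c₃ ^ 2 :=
    ⟨√(1 - c₃ ^ 2), sqrt_pos.2 (by linarith), sq_sqrt (by linarith)⟩
  obtain ⟨a, ha⟩ : ∃ a, s * a = c₁ - c₂ * c₃ := ⟨(c₁ - c₂ * c₃) / s, mul_div_cancel₀ _ hs.ne'⟩
  have hD : 0 < 1 - c₂ ^ 2 - a ^ 2 := by
    have : s ^ 2 * (1 - c₂ ^ 2 - a ^ 2) = (cosineMatrix c₁ c₂ c₃).det := by
      rw [det_cosineMatrix]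
      linear_combination (1 - c₂ ^ 2) * hs2 - (s * a + c₁ - c₂ * c₃) * ha
    exact pos_of_mul_pos_right (this ▸ hdet) (sq_nonneg s)
  obtain ⟨b, hb⟩ : ∃ b, b ^ 2 = 1 - c₂ ^ 2 - a ^ 2 := ⟨_, sq_sqrt hD.le⟩
  refine ⟨!₂[1, 0, 0], !₂[c₃, s, 0], !₂[c₂, a, b], ?_⟩
  ext i j
  fin_cases i <;> fin_cases j <;>
    simp only [gram_apply, PiLp.inner_apply, Fin.sum_univ_three, RCLike.inner_apply, conj_trivial,
      cosineMatrix, of_apply, cons_val', cons_val_fin_one, cons_val_zero, cons_val_one, cons_val,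
      Fin.zero_eta, Fin.mk_one, Fin.reduceFinMk] <;>
    linarith

theorem spherical_triangle_realization_general (l₁ l₂ l₃ : ℝ)
    (h₃ : l₃ ∈ Set.Ioo (0 : ℝ) π)
    (t₁ : l₁ < l₂ + l₃) (t₂ : l₂ < l₁ + l₃) (t₃ : l₃ < l₁ + l₂)
    (hsum : l₁ + l₂ + l₃ < 2 * π) :
    (∃ u v w : EuclideanSpace ℝ (Fin 3),
      ‖u‖ = 1 ∧ ‖v‖ = 1 ∧ ‖w‖ = 1 ∧
      LinearIndependent ℝ ![u, v, w] ∧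
      ⟪v, w⟫ = Real.cos l₁ ∧ ⟪u, w⟫ = Real.cos l₂ ∧ ⟪u, v⟫ = Real.cos l₃) ∧
    (∀ u v w u' v' w' : EuclideanSpace ℝ (Fin 3),
      ‖u‖ = 1 → ‖v‖ = 1 → ‖w‖ = 1 →
      ⟪v, w⟫ = Real.cos l₁ → ⟪u, w⟫ = Real.cos l₂ → ⟪u, v⟫ = Real.cos l₃ →
      ‖u'‖ = 1 → ‖v'‖ = 1 → ‖w'‖ = 1 →
      ⟪v', w'⟫ = Real.cos l₁ → ⟪u', w'⟫ = Real.cos l₂ → ⟪u', v'⟫ = Real.cos l₃ →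
      ∃ f : EuclideanSpace ℝ (Fin 3) ≃ₗᵢ[ℝ] EuclideanSpace ℝ (Fin 3),
        f u = u' ∧ f v = v' ∧ f w = w') := by
  have hdet := det_cosineMatrix_cos_pos t₁ t₂ t₃ hsum
  have hli {u v w : EuclideanSpace ℝ (Fin 3)}
      (h : gram ℝ ![u, v, w] = cosineMatrix (cos l₁) (cos l₂) (cos l₃)) :
      LinearIndependent ℝ ![u, v, w] :=
    linearIndependent_of_det_gram_ne_zero (h ▸ hdet.ne')
  refine ⟨?_, fun u v w u' v' w' hu hv hw hvw huw huv hu' hv' hw' hvw' huw' huv' => ?_⟩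
  · have hc₃ : cos l₃ ^ 2 < 1 := by
      nlinarith [sin_sq_add_cos_sq l₃, sin_pos_of_pos_of_lt_pi h₃.1 h₃.2]
    obtain ⟨u, v, w, h⟩ := exists_gram_eq_cosineMatrix hc₃ hdet
    obtain ⟨hu, hv, hw, hvw, huw, huv⟩ := gram_eq_cosineMatrix_iff.1 h
    exact ⟨u, v, w, hu, hv, hw, hli h, hvw, huw, huv⟩
  · have h := gram_eq_cosineMatrix_iff.2 ⟨hu, hv, hw, hvw, huw, huv⟩
    have h' := gram_eq_cosineMatrix_iff.2 ⟨hu', hv', hw', hvw', huw', huv'⟩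
    obtain ⟨f, hf⟩ := (hli h).exists_linearIsometryEquiv_of_gram_eq (by simp) (h'.trans h.symm)
    exact ⟨f, hf 0, hf 1, hf 2⟩

/-- Existence and uniqueness (up to a linear isometry) of a convex spherical triangle with
prescribed side lengths `l₁, l₂, l₃ ∈ (0, π)` satisfying the strict triangle inequalities
and `l₁ + l₂ + l₃ < 2π`. -/
theorem spherical_triangle_realization (l₁ l₂ l₃ : ℝ)
    (h₁ : l₁ ∈ Set.Ioo (0 : ℝ) π) (h₂ : l₂ ∈ Set.Ioo (0 : ℝ) π) (h₃ : l₃ ∈ Set.Ioo (0 : ℝ) π)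
    (t₁ : l₁ < l₂ + l₃) (t₂ : l₂ < l₁ + l₃) (t₃ : l₃ < l₁ + l₂)
    (hsum : l₁ + l₂ + l₃ < 2 * π) :
    (∃ u v w : EuclideanSpace ℝ (Fin 3),
      ‖u‖ = 1 ∧ ‖v‖ = 1 ∧ ‖w‖ = 1 ∧
      LinearIndependent ℝ ![u, v, w] ∧
      ⟪v, w⟫ = Real.cos l₁ ∧ ⟪u, w⟫ = Real.cos l₂ ∧ ⟪u, v⟫ = Real.cos l₃) ∧
    (∀ u v w u' v' w' : EuclideanSpace ℝ (Fin 3),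
      ‖u‖ = 1 → ‖v‖ = 1 → ‖w‖ = 1 →
      ⟪v, w⟫ = Real.cos l₁ → ⟪u, w⟫ = Real.cos l₂ → ⟪u, v⟫ = Real.cos l₃ →
      ‖u'‖ = 1 → ‖v'‖ = 1 → ‖w'‖ = 1 →
      ⟪v', w'⟫ = Real.cos l₁ → ⟪u', w'⟫ = Real.cos l₂ → ⟪u', v'⟫ = Real.cos l₃ →
      ∃ f : EuclideanSpace ℝ (Fin 3) ≃ₗᵢ[ℝ] EuclideanSpace ℝ (Fin 3),
        f u = u' ∧ f v = v' ∧ f w = w') :=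
  spherical_triangle_realization_general l₁ l₂ l₃ h₃ t₁ t₂ t₃ hsum
end

section
/- Let u, v, w be linearly independent unit vectors in the Euclidean space ℝ³, and let l₁ = arccos⟨v, w⟩, l₂ = arccos⟨u, w⟩, l₃ = arccos⟨u, v⟩ be the pairwise spherical distances. Then each lᵢ lies in the open interval (0, π), the strict triangle inequalities hold (each lᵢ is less than the sum of the other two), and l₁ + l₂ + l₃ < 2π. -/
/-!
For unit vectors the spherical distance `arccos ⟪x, y⟫` is the angle `angle x y`. No two of the
vectors are parallel, so each angle lies in `(0, π)`. The triangle inequality for angles is an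
equality only if the middle vector lies in the nonnegative cone spanned by the outer two or the
outer two are antipodal, and linear independence excludes both. Replacing the middle vector `y`
by `-y` replaces its two angles `α, β` by `π - α, π - β`, so the strict triangle inequality for
`x, -y, z` bounds the perimeter by `2π`.
-/

open Real
open scoped RealInnerProductSpace

theorem LinearIndependent.notMem_span_pair {ι R M : Type*} [Ring R] [Nontrivial R]
    [AddCommGroup M] [Module R M] {f : ι → M} (hf : LinearIndependent R f) {i j k : ι}
    (hij : i ≠ j) (hik : i ≠ k) : f i ∉ Submodule.span R {f j, f k} := by
  simpa [Set.image_insert_eq] using hf.notMem_span_image (s := {j, k}) (by simp [hij, hik])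

namespace InnerProductGeometry

variable {V : Type*} [NormedAddCommGroup V] [InnerProductSpace ℝ V]

theorem angle_eq_arccos_inner_of_norm_eq_one {x y : V} (hx : ‖x‖ = 1) (hy : ‖y‖ = 1) :
    angle x y = arccos ⟪x, y⟫ := by
  rw [angle, hx, hy, mul_one, div_one]

theorem angle_mem_Ioo_of_notMem_span_singleton {x y : V} (h : y ∉ ℝ ∙ x) :
    angle x y ∈ Set.Ioo 0 π := by
  have hmul : ∀ r : ℝ, y ≠ r • x := fun r hr =>
    h (hr ▸ Submodule.smul_mem _ r (Submodule.mem_span_singleton_self x))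
  refine ⟨(angle_nonneg x y).lt_of_ne fun h0 => ?_, (angle_le_pi x y).lt_of_ne fun hπ => ?_⟩
  · obtain ⟨-, r, -, hr⟩ := angle_eq_zero_iff.1 h0.symm
    exact hmul r hr
  · obtain ⟨-, r, -, hr⟩ := angle_eq_pi_iff.1 hπ
    exact hmul r hr

theorem angle_lt_angle_add_angle_of_notMem_span {x y z : V} (hxz : angle x z ≠ π)
    (hy : y ∉ Submodule.span ℝ {x, z}) : angle x z < angle x y + angle y z := by
  refine (angle_le_angle_add_angle x y z).lt_of_ne fun h => ?_
  have hy0 : y ≠ 0 := fun h0 => hy (h0 ▸ Submodule.zero_mem _)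
  rcases (angle_eq_angle_add_angle_iff hy0).1 h with hπ | hmem
  · exact hxz hπ
  · exact hy (Submodule.span_le_restrictScalars NNReal ℝ _ hmem)

theorem angle_add_angle_add_angle_lt_two_pi {x y z : V} (hxz : angle x z ≠ π)
    (hy : y ∉ Submodule.span ℝ {x, z}) : angle x y + angle y z + angle x z < 2 * π := by
  have h := angle_lt_angle_add_angle_of_notMem_span hxz (y := -y) (by rwa [Submodule.neg_mem_iff])
  rw [angle_neg_right, angle_neg_left] at h
  linarith

end InnerProductGeometry

open InnerProductGeometry

/-- The pairwise spherical distances of three linearly independent unit vectors in `ℝ³`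
lie in `(0, π)`, satisfy the strict triangle inequalities, and have sum `< 2π`. -/
theorem spherical_triangle_side_lengths (u v w : EuclideanSpace ℝ (Fin 3))
    (hu : ‖u‖ = 1) (hv : ‖v‖ = 1) (hw : ‖w‖ = 1)
    (hli : LinearIndependent ℝ ![u, v, w])
    (l₁ l₂ l₃ : ℝ)
    (hl₁ : l₁ = Real.arccos ⟪v, w⟫)
    (hl₂ : l₂ = Real.arccos ⟪u, w⟫)
    (hl₃ : l₃ = Real.arccos ⟪u, v⟫) :
    l₁ ∈ Set.Ioo (0 : ℝ) π ∧ l₂ ∈ Set.Ioo (0 : ℝ) π ∧ l₃ ∈ Set.Ioo (0 : ℝ) π ∧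
    l₁ < l₂ + l₃ ∧ l₂ < l₁ + l₃ ∧ l₃ < l₁ + l₂ ∧
    l₁ + l₂ + l₃ < 2 * π := by
  subst hl₁ hl₂ hl₃
  rw [← angle_eq_arccos_inner_of_norm_eq_one hv hw, ← angle_eq_arccos_inner_of_norm_eq_one hu hw,
    ← angle_eq_arccos_inner_of_norm_eq_one hu hv]
  have hu_vw : u ∉ Submodule.span ℝ {v, w} :=
    hli.notMem_span_pair (i := 0) (j := 1) (k := 2) (by decide) (by decide)
  have hv_uw : v ∉ Submodule.span ℝ {u, w} :=
    hli.notMem_span_pair (i := 1) (j := 0) (k := 2) (by decide) (by decide)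
  have hw_uv : w ∉ Submodule.span ℝ {u, v} :=
    hli.notMem_span_pair (i := 2) (j := 0) (k := 1) (by decide) (by decide)
  have hvw : angle v w ∈ Set.Ioo 0 π :=
    angle_mem_Ioo_of_notMem_span_singleton fun h => hw_uv (Submodule.span_mono (by simp) h)
  have huw : angle u w ∈ Set.Ioo 0 π :=
    angle_mem_Ioo_of_notMem_span_singleton fun h => hw_uv (Submodule.span_mono (by simp) h)
  have huv : angle u v ∈ Set.Ioo 0 π :=
    angle_mem_Ioo_of_notMem_span_singleton fun h => hv_uw (Submodule.span_mono (by simp) h)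
  refine ⟨hvw, huw, huv, ?_, ?_, ?_, ?_⟩
  · linarith [angle_lt_angle_add_angle_of_notMem_span hvw.2.ne hu_vw, angle_comm v u]
  · linarith [angle_lt_angle_add_angle_of_notMem_span huw.2.ne hv_uw]
  · linarith [angle_lt_angle_add_angle_of_notMem_span huv.2.ne hw_uv, angle_comm w v]
  · linarith [angle_add_angle_add_angle_lt_two_pi huw.2.ne hv_uw]
end

section
/- Let u, v, w be linearly independent unit vectors in the Euclidean space ℝ³. Define the interior angle of the spherical triangle at u as A = ∠(v − ⟨v, u⟩u, w − ⟨w, u⟩u) (the angle between the tangential projections of v and w at u), and similarly B at v and C at w. Then B + C < π + A. (Equivalently, the exterior angles π − A, π − B, π − C satisfy the strict triangle inequality, being the side lengths of the polar triangle.) -/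
open Real
open scoped RealInnerProductSpace

/-!
By the spherical law of cosines, the cosines of the angles are rational expressions in the
cosines `a = ⟪v, w⟫`, `b = ⟪u, w⟫`, `c = ⟪u, v⟫` of the sides, and the sines are `√D` over the
same denominators, where `D = 1 - a² - b² - c² + 2abc` is the Gram determinant of `u, v, w`,
positive by linear independence. A direct computation then gives
`-cos (B + C) - cos A = D / ((1 + a) √(1 - b²) √(1 - c²)) > 0`, i.e. `cos A < cos (B + C - π)`,
and monotonicity of `cos` on `[0, π]` turns this into `B + C - π < A`.
-/

open InnerProductGeometry

section Sphere

variable {E : Type*} [NormedAddCommGroup E] [InnerProductSpace ℝ E] {u v w : E}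

noncomputable def sphericalAngle (u v w : E) : ℝ :=
  angle (v - ⟪v, u⟫ • u) (w - ⟪w, u⟫ • u)

lemma inner_sub_inner_smul_sub_inner_smul (hu : ‖u‖ = 1) (v w : E) :
    ⟪v - ⟪v, u⟫ • u, w - ⟪w, u⟫ • u⟫ = ⟪v, w⟫ - ⟪u, v⟫ * ⟪u, w⟫ := by
  have huu : ⟪u, u⟫ = 1 := by rw [real_inner_self_eq_norm_sq, hu, one_pow]
  simp only [inner_sub_left, inner_sub_right, real_inner_smul_left, real_inner_smul_right, huu,
    real_inner_comm u]
  ring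

lemma norm_sub_inner_smul_of_norm_eq_one (hu : ‖u‖ = 1) (hv : ‖v‖ = 1) :
    ‖v - ⟪v, u⟫ • u‖ = √(1 - ⟪u, v⟫ ^ 2) := by
  rw [norm_eq_sqrt_real_inner, inner_sub_inner_smul_sub_inner_smul hu, real_inner_self_eq_norm_sq,
    hv]
  ring_nf

lemma cos_sphericalAngle_mul_sqrt (hu : ‖u‖ = 1) (hv : ‖v‖ = 1) (hw : ‖w‖ = 1) :
    cos (sphericalAngle u v w) * (√(1 - ⟪u, v⟫ ^ 2) * √(1 - ⟪u, w⟫ ^ 2)) =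
      ⟪v, w⟫ - ⟪u, v⟫ * ⟪u, w⟫ := by
  rw [← norm_sub_inner_smul_of_norm_eq_one hu hv, ← norm_sub_inner_smul_of_norm_eq_one hu hw,
    ← inner_sub_inner_smul_sub_inner_smul hu]
  exact cos_angle_mul_norm_mul_norm _ _

lemma real_inner_sq_le_one (hu : ‖u‖ = 1) (hv : ‖v‖ = 1) : ⟪u, v⟫ ^ 2 ≤ 1 := by
  simpa [hu, hv, sq_le_one_iff_abs_le_one] using abs_real_inner_le_norm u v

lemma gram_det_pos_of_linearIndependent (hu : ‖u‖ = 1) (hv : ‖v‖ = 1) (hw : ‖w‖ = 1)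
    (h : LinearIndependent ℝ ![u, v, w]) :
    0 < 1 - ⟪u, v⟫ ^ 2 - ⟪u, w⟫ ^ 2 - ⟪v, w⟫ ^ 2 + 2 * ⟪u, v⟫ * ⟪u, w⟫ * ⟪v, w⟫ := by
  have hdet := (Matrix.posDef_gram_of_linearIndependent h).det_pos
  simp only [Matrix.det_fin_three, Matrix.gram_apply] at hdet
  simp only [Matrix.cons_val_zero, Matrix.cons_val_one, Matrix.cons_val, real_inner_self_eq_norm_sq,
    hu, hv, hw, one_pow, mul_one, one_mul] at hdet
  rw [real_inner_comm u w, real_inner_comm u v, real_inner_comm v w] at hdet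
  linarith

end Sphere

lemma sin_mul_eq_sqrt_sq_sub_sq {θ k : ℝ} (hθ : 0 ≤ sin θ) (hk : 0 ≤ k) :
    sin θ * k = √(k ^ 2 - (cos θ * k) ^ 2) := by
  rw [← sqrt_sq (mul_nonneg hθ hk), mul_pow, sin_sq]
  ring_nf

lemma cos_lt_neg_cos_add_of_spherical_cosines {a b c A B C : ℝ}
    (hD : 0 < 1 - c ^ 2 - b ^ 2 - a ^ 2 + 2 * c * b * a)
    (ha : a ^ 2 ≤ 1) (hb : b ^ 2 ≤ 1) (hc : c ^ 2 ≤ 1)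
    (hcosA : cos A * (√(1 - c ^ 2) * √(1 - b ^ 2)) = a - c * b)
    (hcosB : cos B * (√(1 - c ^ 2) * √(1 - a ^ 2)) = b - c * a)
    (hcosC : cos C * (√(1 - b ^ 2) * √(1 - a ^ 2)) = c - b * a)
    (hB : 0 ≤ sin B) (hC : 0 ≤ sin C) :
    cos A < -cos (B + C) := by
  set D := 1 - c ^ 2 - b ^ 2 - a ^ 2 + 2 * c * b * a
  have ha' : 0 < 1 - a ^ 2 := by nlinarith [sq_nonneg (b - c * a)]
  have hb' : 0 < 1 - b ^ 2 := by nlinarith [sq_nonneg (a - c * b)]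
  have hc' : 0 < 1 - c ^ 2 := by nlinarith [sq_nonneg (a - c * b)]
  have hsa := sq_sqrt ha'.le
  have hsinB : sin B * (√(1 - c ^ 2) * √(1 - a ^ 2)) = √D := by
    rw [sin_mul_eq_sqrt_sq_sub_sq hB (by positivity), hcosB, mul_pow, sq_sqrt hc'.le, hsa]
    congr 1
    ring
  have hsinC : sin C * (√(1 - b ^ 2) * √(1 - a ^ 2)) = √D := by
    rw [sin_mul_eq_sqrt_sq_sub_sq hC (by positivity), hcosC, mul_pow, sq_sqrt hb'.le, hsa]
    congr 1
    ring
  have key : (sin B * sin C - cos B * cos C - cos A) * ((1 - a ^ 2) * √(1 - b ^ 2) * √(1 - c ^ 2)) =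
      D * (1 - a) := by
    linear_combination (sin C * √(1 - b ^ 2) * √(1 - a ^ 2)) * hsinB + √D * hsinC
      + sq_sqrt hD.le - (cos C * √(1 - b ^ 2) * √(1 - a ^ 2)) * hcosB - (b - c * a) * hcosC
      - (1 - a ^ 2) * hcosA - (sin B * sin C - cos B * cos C) * √(1 - b ^ 2) * √(1 - c ^ 2) * hsa
  have hpos : 0 < sin B * sin C - cos B * cos C - cos A := by
    refine pos_of_mul_pos_left (key ▸ mul_pos hD ?_) (by positivity)
    nlinarith
  rw [cos_add]
  linarith

lemma add_lt_pi_add_of_cos_lt_neg_cos_add {A B C : ℝ} (hA : A ∈ Set.Icc 0 π)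
    (hB : B ≤ π) (hC : C ≤ π) (h : cos A < -cos (B + C)) : B + C < π + A := by
  by_contra! hle
  have hmem : B + C - π ∈ Set.Icc 0 π := ⟨by linarith [hA.1], by linarith⟩
  have hcos := strictAntiOn_cos.antitoneOn hA hmem (by linarith)
  rw [cos_sub_pi] at hcos
  linarith

/-- For a nondegenerate spherical triangle with vertices `u`, `v`, `w` (linearly
independent unit vectors in `ℝ³`) and interior angles `A`, `B`, `C` at `u`, `v`, `w`
(angles between the tangential projections of the other two vertices), one has
`B + C < π + A`. -/
theorem spherical_triangle_angle_inequality (u v w : EuclideanSpace ℝ (Fin 3))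
    (hu : ‖u‖ = 1) (hv : ‖v‖ = 1) (hw : ‖w‖ = 1)
    (hli : LinearIndependent ℝ ![u, v, w])
    (A B C : ℝ)
    (hA : A = InnerProductGeometry.angle (v - ⟪v, u⟫ • u) (w - ⟪w, u⟫ • u))
    (hB : B = InnerProductGeometry.angle (u - ⟪u, v⟫ • v) (w - ⟪w, v⟫ • v))
    (hC : C = InnerProductGeometry.angle (u - ⟪u, w⟫ • w) (v - ⟪v, w⟫ • w)) :
    B + C < π + A := by
  have hcosA := cos_sphericalAngle_mul_sqrt hu hv hw
  have hcosB := cos_sphericalAngle_mul_sqrt hv hu hw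
  have hcosC := cos_sphericalAngle_mul_sqrt hw hu hv
  rw [real_inner_comm u v] at hcosB
  rw [real_inner_comm u w, real_inner_comm v w] at hcosC
  subst hA hB hC
  refine add_lt_pi_add_of_cos_lt_neg_cos_add ⟨angle_nonneg _ _, angle_le_pi _ _⟩
    (angle_le_pi _ _) (angle_le_pi _ _) ?_
  exact cos_lt_neg_cos_add_of_spherical_cosines (gram_det_pos_of_linearIndependent hu hv hw hli)
    (real_inner_sq_le_one hv hw) (real_inner_sq_le_one hu hw) (real_inner_sq_le_one hu hv)
    hcosA hcosB hcosC (sin_angle_nonneg _ _) (sin_angle_nonneg _ _)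
end

section
/- Let a, b, c be positive reals satisfying the strict triangle inequality (each one less than the sum of the other two), let s = (a+b+c)/2, K = √(s(s−a)(s−b)(s−c)) be the area of the Euclidean triangle with sides a, b, c, and R = abc/(4K) its circumradius. Then the following are equivalent: (i) R < 1; (ii) a, b, c < 2 and the numbers l₁ = 2·arcsin(a/2), l₂ = 2·arcsin(b/2), l₃ = 2·arcsin(c/2) lie in (0, π), satisfy the strict triangle inequalities, and have l₁ + l₂ + l₃ < 2π. -/
open Real

set_option maxHeartbeats 2000000 in
lemma sph_aux (a b c : ℝ) (ha : 0 < a) (hb : 0 < b) (hc : 0 < c)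
    (ha2 : a < 2) (hb2 : b < 2) (hc2 : c < 2) :
    (a^2*b^2*c^2 + a^4 + b^4 + c^4 < 2*(a^2*b^2 + b^2*c^2 + a^2*c^2)) ↔
      (Real.arcsin (a/2) < Real.arcsin (b/2) + Real.arcsin (c/2) ∧
       Real.arcsin (b/2) < Real.arcsin (a/2) + Real.arcsin (c/2) ∧
       Real.arcsin (c/2) < Real.arcsin (a/2) + Real.arcsin (b/2) ∧
       Real.arcsin (a/2) + Real.arcsin (b/2) + Real.arcsin (c/2) < π) := by
  have hπ := Real.pi_pos
  set β := Real.arcsin (a/2) with hβdef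
  set γ := Real.arcsin (b/2) with hγdef
  set δ := Real.arcsin (c/2) with hδdef
  have hβ0 : 0 < β := Real.arcsin_pos.2 (by linarith)
  have hγ0 : 0 < γ := Real.arcsin_pos.2 (by linarith)
  have hδ0 : 0 < δ := Real.arcsin_pos.2 (by linarith)
  have hβπ : β < π/2 := Real.arcsin_lt_pi_div_two.2 (by linarith)
  have hγπ : γ < π/2 := Real.arcsin_lt_pi_div_two.2 (by linarith)
  have hδπ : δ < π/2 := Real.arcsin_lt_pi_div_two.2 (by linarith)
  have hsβ : Real.sin β = a/2 := Real.sin_arcsin (by linarith) (by linarith)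
  have hsγ : Real.sin γ = b/2 := Real.sin_arcsin (by linarith) (by linarith)
  have hsδ : Real.sin δ = c/2 := Real.sin_arcsin (by linarith) (by linarith)
  set u := Real.sqrt (1-(b/2)^2) with hudef
  set v := Real.sqrt (1-(c/2)^2) with hvdef
  have hcγ : Real.cos γ = u := Real.cos_arcsin _
  have hcδ : Real.cos δ = v := Real.cos_arcsin _
  have hu2 : u^2 = 1-(b/2)^2 := Real.sq_sqrt (by nlinarith)
  have hv2 : v^2 = 1-(c/2)^2 := Real.sq_sqrt (by nlinarith)
  have hu0 : 0 < u := Real.sqrt_pos.2 (by nlinarith)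
  have hv0 : 0 < v := Real.sqrt_pos.2 (by nlinarith)
  have hsum : Real.sin (γ+δ) = (b*v + c*u)/2 := by
    rw [Real.sin_add, hsγ, hsδ, hcγ, hcδ]; ring
  have hdiff : Real.sin (γ-δ) = (b*v - c*u)/2 := by
    rw [Real.sin_sub, hsγ, hsδ, hcγ, hcδ]; ring
  have hdiff' : Real.sin (δ-γ) = (c*u - b*v)/2 := by
    rw [Real.sin_sub, hsγ, hsδ, hcγ, hcδ]; ring
  have hX2 : (2*b*c*(u*v))^2 = 4*b^2*c^2*((1-(b/2)^2)*(1-(c/2)^2)) := by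
    rw [show (2*b*c*(u*v))^2 = 4*b^2*c^2*(u^2*v^2) by ring, hu2, hv2]
  have hX0 : 0 ≤ 2*b*c*(u*v) := by positivity
  have hbv : (b*v)^2 = b^2*(1-(c/2)^2) := by rw [mul_pow, hv2]
  have hcu : (c*u)^2 = c^2*(1-(b/2)^2) := by rw [mul_pow, hu2]
  constructor
  · intro hQ
    have hXs : (a^2 - b^2 - c^2 + b^2*c^2/2)^2 < (2*b*c*(u*v))^2 := by
      rw [hX2]; linarith [hQ]
    have hgt : a^2 - b^2 - c^2 + b^2*c^2/2 < 2*b*c*(u*v) :=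
      lt_of_pow_lt_pow_left₀ 2 hX0 hXs
    have hgt' : -(a^2 - b^2 - c^2 + b^2*c^2/2) < 2*b*c*(u*v) :=
      lt_of_pow_lt_pow_left₀ 2 hX0 (by rw [neg_pow_two]; exact hXs)
    have key1 : a < b*v + c*u := by
      have h1 : a^2 < (b*v + c*u)^2 := by linarith [hgt, hbv, hcu]
      exact lt_of_pow_lt_pow_left₀ 2 (by positivity) h1
    have key2 : b*v - c*u < a := by
      have h1 : (b*v - c*u)^2 < a^2 := by linarith [hgt', hbv, hcu]
      exact lt_of_pow_lt_pow_left₀ 2 ha.le h1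
    have key3 : c*u - b*v < a := by
      have h1 : (c*u - b*v)^2 < a^2 := by linarith [hgt', hbv, hcu]
      exact lt_of_pow_lt_pow_left₀ 2 ha.le h1
    have hS : Real.sin β < Real.sin (γ+δ) := by rw [hsum, hsβ]; linarith
    have hmβ : β ∈ Set.Icc (-(π/2)) (π/2) := ⟨by linarith, hβπ.le⟩
    refine ⟨?_, ?_, ?_, ?_⟩
    · rcases le_or_gt (γ+δ) (π/2) with h | h
      · exact (Real.strictMonoOn_sin.lt_iff_lt hmβ ⟨by linarith, h⟩).1 hS
      · linarith
    · have h2 : Real.sin (γ-δ) < Real.sin β := by rw [hdiff, hsβ]; linarith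
      have := (Real.strictMonoOn_sin.lt_iff_lt ⟨by linarith, by linarith⟩ hmβ).1 h2
      linarith
    · have h2 : Real.sin (δ-γ) < Real.sin β := by rw [hdiff', hsβ]; linarith
      have := (Real.strictMonoOn_sin.lt_iff_lt ⟨by linarith, by linarith⟩ hmβ).1 h2
      linarith
    · rcases le_or_gt (γ+δ) (π/2) with h | h
      · linarith
      · have h5 : Real.sin β < Real.sin (π - (γ+δ)) := by rw [Real.sin_pi_sub]; exact hS
        have := (Real.strictMonoOn_sin.lt_iff_lt hmβ ⟨by linarith, by linarith⟩).1 h5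
        linarith
  · rintro ⟨C1, C2, C3, C4⟩
    have hmβ : β ∈ Set.Icc (-(π/2)) (π/2) := ⟨by linarith, hβπ.le⟩
    have hS : a/2 < Real.sin (γ+δ) := by
      rcases le_or_gt (γ+δ) (π/2) with h | h
      · have := (Real.strictMonoOn_sin.lt_iff_lt hmβ ⟨by linarith, h⟩).2 C1
        rwa [hsβ] at this
      · have h5 := (Real.strictMonoOn_sin.lt_iff_lt hmβ ⟨by linarith, by linarith⟩).2
          (show β < π - (γ+δ) by linarith)
        rw [Real.sin_pi_sub] at h5; rwa [hsβ] at h5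
    have h2 : Real.sin (γ-δ) < a/2 := by
      have := (Real.strictMonoOn_sin.lt_iff_lt ⟨by linarith, by linarith⟩ hmβ).2
        (show γ - δ < β by linarith)
      rwa [hsβ] at this
    have h3 : Real.sin (δ-γ) < a/2 := by
      have := (Real.strictMonoOn_sin.lt_iff_lt ⟨by linarith, by linarith⟩ hmβ).2
        (show δ - γ < β by linarith)
      rwa [hsβ] at this
    rw [hsum] at hS
    rw [hdiff] at h2
    rw [hdiff'] at h3
    have key1 : a < b*v + c*u := by linarith
    have key2 : b*v - c*u < a := by linarith
    have key3 : c*u - b*v < a := by linarith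
    have h1sq : a^2 < (b*v + c*u)^2 := pow_lt_pow_left₀ key1 ha.le two_ne_zero
    have habs : (b*v - c*u)^2 < a^2 := sq_lt_sq' (by linarith) key2
    have hgt : a^2 - b^2 - c^2 + b^2*c^2/2 < 2*b*c*(u*v) := by linarith [h1sq, hbv, hcu]
    have hgt' : -(a^2 - b^2 - c^2 + b^2*c^2/2) < 2*b*c*(u*v) := by linarith [habs, hbv, hcu]
    have hXs : (a^2 - b^2 - c^2 + b^2*c^2/2)^2 < (2*b*c*(u*v))^2 := by
      linarith [mul_pos (sub_pos.2 hgt) (sub_pos.2 hgt')]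
    rw [hX2] at hXs
    linarith [hXs]

set_option maxHeartbeats 2000000 in
/-- A Euclidean triangle with side lengths `a`, `b`, `c` has circumradius `< 1` if and only
if it is subtended by a convex spherical triangle on the unit sphere, i.e. iff `a, b, c < 2`
and the spherical side lengths `lᵢ = 2·arcsin (·/2)` lie in `(0, π)`, satisfy the strict
triangle inequalities and have perimeter `< 2π`. -/
theorem circumradius_lt_one_iff_spherical (a b c : ℝ)
    (ha : 0 < a) (hb : 0 < b) (hc : 0 < c)
    (t₁ : a < b + c) (t₂ : b < a + c) (t₃ : c < a + b)
    (s K R l₁ l₂ l₃ : ℝ)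
    (hs : s = (a + b + c) / 2)
    (hK : K = Real.sqrt (s * (s - a) * (s - b) * (s - c)))
    (hR : R = a * b * c / (4 * K))
    (hl₁ : l₁ = 2 * Real.arcsin (a / 2))
    (hl₂ : l₂ = 2 * Real.arcsin (b / 2))
    (hl₃ : l₃ = 2 * Real.arcsin (c / 2)) :
    R < 1 ↔
      (a < 2 ∧ b < 2 ∧ c < 2 ∧
        l₁ ∈ Set.Ioo 0 π ∧ l₂ ∈ Set.Ioo 0 π ∧ l₃ ∈ Set.Ioo 0 π ∧
        l₁ < l₂ + l₃ ∧ l₂ < l₁ + l₃ ∧ l₃ < l₁ + l₂ ∧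
        l₁ + l₂ + l₃ < 2 * π) := by
  subst hs hK hR hl₁ hl₂ hl₃
  have hπ := Real.pi_pos
  have hP : 0 < ((a+b+c)/2) * (((a+b+c)/2) - a) * (((a+b+c)/2) - b) * (((a+b+c)/2) - c) := by
    have h1 : 0 < (a+b+c)/2 := by linarith
    have h2 : 0 < (a+b+c)/2 - a := by linarith
    have h3 : 0 < (a+b+c)/2 - b := by linarith
    have h4 : 0 < (a+b+c)/2 - c := by linarith
    exact mul_pos (mul_pos (mul_pos h1 h2) h3) h4
  have hK0 : 0 < Real.sqrt (((a+b+c)/2) * (((a+b+c)/2) - a) * (((a+b+c)/2) - b) * (((a+b+c)/2) - c)) :=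
    Real.sqrt_pos.2 hP
  have hKsq : (Real.sqrt (((a+b+c)/2) * (((a+b+c)/2) - a) * (((a+b+c)/2) - b) * (((a+b+c)/2) - c)))^2
      = ((a+b+c)/2) * (((a+b+c)/2) - a) * (((a+b+c)/2) - b) * (((a+b+c)/2) - c) :=
    Real.sq_sqrt hP.le
  have step1 : a * b * c / (4 * Real.sqrt (((a+b+c)/2) * (((a+b+c)/2) - a) * (((a+b+c)/2) - b) * (((a+b+c)/2) - c))) < 1
      ↔ (a^2*b^2*c^2 + a^4 + b^4 + c^4 < 2*(a^2*b^2 + b^2*c^2 + a^2*c^2)) := by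
    rw [div_lt_one (by positivity)]
    constructor
    · intro h
      have h2 : (a*b*c)^2 < (4 * Real.sqrt (((a+b+c)/2) * (((a+b+c)/2) - a) * (((a+b+c)/2) - b) * (((a+b+c)/2) - c)))^2 :=
        pow_lt_pow_left₀ h (by positivity) two_ne_zero
      nlinarith [h2, hKsq, sq_nonneg (a*b*c)]
    · intro h
      have h2 : (a*b*c)^2 < (4 * Real.sqrt (((a+b+c)/2) * (((a+b+c)/2) - a) * (((a+b+c)/2) - b) * (((a+b+c)/2) - c)))^2 := by
        nlinarith [hKsq]
      exact lt_of_pow_lt_pow_left₀ 2 (by positivity) h2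
  rw [step1]
  constructor
  · intro hQ
    have ha2 : a < 2 := by
      by_contra h; push_neg at h
      have h5 : (0:ℝ) ≤ (a^2-4)*(b^2*c^2) :=
        mul_nonneg (by nlinarith) (by positivity)
      nlinarith [hQ, sq_nonneg (a^2-b^2-c^2), h5]
    have hb2 : b < 2 := by
      by_contra h; push_neg at h
      have h5 : (0:ℝ) ≤ (b^2-4)*(a^2*c^2) :=
        mul_nonneg (by nlinarith) (by positivity)
      nlinarith [hQ, sq_nonneg (b^2-a^2-c^2), h5]
    have hc2 : c < 2 := by
      by_contra h; push_neg at h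
      have h5 : (0:ℝ) ≤ (c^2-4)*(a^2*b^2) :=
        mul_nonneg (by nlinarith) (by positivity)
      nlinarith [hQ, sq_nonneg (c^2-a^2-b^2), h5]
    obtain ⟨C1, C2, C3, C4⟩ := (sph_aux a b c ha hb hc ha2 hb2 hc2).1 hQ
    have hβ0 : 0 < Real.arcsin (a/2) := Real.arcsin_pos.2 (by linarith)
    have hγ0 : 0 < Real.arcsin (b/2) := Real.arcsin_pos.2 (by linarith)
    have hδ0 : 0 < Real.arcsin (c/2) := Real.arcsin_pos.2 (by linarith)
    have hβπ : Real.arcsin (a/2) < π/2 := Real.arcsin_lt_pi_div_two.2 (by linarith)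
    have hγπ : Real.arcsin (b/2) < π/2 := Real.arcsin_lt_pi_div_two.2 (by linarith)
    have hδπ : Real.arcsin (c/2) < π/2 := Real.arcsin_lt_pi_div_two.2 (by linarith)
    exact ⟨ha2, hb2, hc2, ⟨by linarith, by linarith⟩, ⟨by linarith, by linarith⟩,
      ⟨by linarith, by linarith⟩, by linarith, by linarith, by linarith, by linarith⟩
  · rintro ⟨ha2, hb2, hc2, -, -, -, hT1, hT2, hT3, hsum⟩
    have hβπ : Real.arcsin (a/2) ≤ π/2 := Real.arcsin_le_pi_div_two _
    have hγπ : Real.arcsin (b/2) ≤ π/2 := Real.arcsin_le_pi_div_two _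
    have hδπ : Real.arcsin (c/2) ≤ π/2 := Real.arcsin_le_pi_div_two _
    exact (sph_aux a b c ha hb hc ha2 hb2 hc2).2
      ⟨by linarith, by linarith, by linarith, by linarith⟩
end
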